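/- With the notation above (B compact strictly convex with nonempty interior, S = ∂B, median M_v), one has M_v ∩ S = D_v^0; i.e., every point of the median that is the midpoint of two distinct fiber points lies in the interior of B. -/

import Mathlib

open Metric Set
open scoped RealInnerProductSpace

/-- Orthogonal projection of `ℝ^{n+1}` onto the hyperplane orthogonal to `v`. -/
noncomputable def pv {n : ℕ} (v : EuclideanSpace ℝ (Fin (n + 1))) :
    EuclideanSpace ℝ (Fin (n + 1)) →L[ℝ] ↥((ℝ ∙ v)ᗮ) :=
  Submodule.orthogonalProjection (ℝ ∙ v)ᗮ

/-- `B` is strictly convex: every open segment between two distinct points of `B`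
lies in the interior of `B`. -/
def StrictlyConvexSet {V : Type*} [AddCommGroup V] [Module ℝ V] [TopologicalSpace V]
    (B : Set V) : Prop :=
  ∀ x ∈ B, ∀ y ∈ B, x ≠ y → openSegment ℝ x y ⊆ interior B

/-- Points of `B` projecting to the boundary of `p_v(B)`. -/
def D0 {n : ℕ} (B : Set (EuclideanSpace ℝ (Fin (n + 1)))) (v : EuclideanSpace ℝ (Fin (n + 1))) :
    Set (EuclideanSpace ℝ (Fin (n + 1))) :=
  {x ∈ B | pv v x ∈ frontier (pv v '' B)}

/-- Upper region of `S = ∂B`: points over the interior of `p_v(B)` maximizing `x·v` on the fiber. -/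
def Uplus {n : ℕ} (B : Set (EuclideanSpace ℝ (Fin (n + 1)))) (v : EuclideanSpace ℝ (Fin (n + 1))) :
    Set (EuclideanSpace ℝ (Fin (n + 1))) :=
  {x | x ∈ frontier B ∧ pv v x ∈ interior (pv v '' B) ∧
    ∀ y ∈ B, pv v y = pv v x → ⟪y, v⟫ ≤ ⟪x, v⟫}

/-- Lower region of `S = ∂B`: points over the interior of `p_v(B)` minimizing `x·v` on the fiber. -/
def Uminus {n : ℕ} (B : Set (EuclideanSpace ℝ (Fin (n + 1)))) (v : EuclideanSpace ℝ (Fin (n + 1))) :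
    Set (EuclideanSpace ℝ (Fin (n + 1))) :=
  {x | x ∈ frontier B ∧ pv v x ∈ interior (pv v '' B) ∧
    ∀ y ∈ B, pv v y = pv v x → ⟪x, v⟫ ≤ ⟪y, v⟫}

def Dplus {n : ℕ} (B : Set (EuclideanSpace ℝ (Fin (n + 1)))) (v : EuclideanSpace ℝ (Fin (n + 1))) :
    Set (EuclideanSpace ℝ (Fin (n + 1))) := D0 B v ∪ Uplus B v

def Dminus {n : ℕ} (B : Set (EuclideanSpace ℝ (Fin (n + 1)))) (v : EuclideanSpace ℝ (Fin (n + 1))) :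
    Set (EuclideanSpace ℝ (Fin (n + 1))) := D0 B v ∪ Uminus B v

/-- The median of `S` in direction `v`: midpoints of fiber pairs. -/
def median {n : ℕ} (B : Set (EuclideanSpace ℝ (Fin (n + 1)))) (v : EuclideanSpace ℝ (Fin (n + 1))) :
    Set (EuclideanSpace ℝ (Fin (n + 1))) :=
  {z | ∃ xp ∈ Dplus B v, ∃ xm ∈ Dminus B v, pv v xp = pv v xm ∧ z = midpoint ℝ xp xm}

/-! A boundary point of the median is the midpoint of two fibre points of `B`; strict convexity
forces them to coincide, so unless the point lies in `D_v^0` it is both the top and the bottom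
of its fibre, which is therefore a single point. If that fibre lay over the interior of `p_v(B)`, a segment from an
interior point of `B` to a point of `B` just beyond the fibre would cross the fibre, by strict
convexity, in an interior point of `B`, namely the point itself. Conversely, `p_v` is an open
map, so points of `B` over the frontier of `p_v(B)` are not interior to `B`. -/

open Filter Topology AffineMap

theorem eq_of_orthogonalProjectionOnto_eq_of_inner_eq {E : Type*} [NormedAddCommGroup E]
    [InnerProductSpace ℝ E] {v x y : E}
    (hproj : (ℝ ∙ v)ᗮ.orthogonalProjectionOnto x = (ℝ ∙ v)ᗮ.orthogonalProjectionOnto y)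
    (hinner : ⟪x, v⟫ = ⟪y, v⟫) : x = y := by
  have hker : (ℝ ∙ v)ᗮ.orthogonalProjectionOnto (x - y) = 0 := by rw [map_sub, hproj, sub_self]
  rw [Submodule.orthogonalProjectionOnto_eq_zero_iff, Submodule.orthogonal_orthogonal,
    Submodule.mem_span_singleton] at hker
  obtain ⟨c, hc⟩ := hker
  have hself : ⟪x - y, x - y⟫ = 0 := by
    rw [← hc, real_inner_smul_right, hc, inner_sub_left, hinner, sub_self, mul_zero]
  rw [← sub_eq_zero, ← inner_self_eq_zero (𝕜 := ℝ), hself]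

theorem exists_one_lt_lineMap_mem {F : Type*} [AddCommGroup F] [Module ℝ F] [TopologicalSpace F]
    [IsTopologicalAddGroup F] [ContinuousSMul ℝ F] {S : Set F} {p : F} (hp : p ∈ interior S)
    (q : F) : ∃ t : ℝ, 1 < t ∧ lineMap q p t ∈ S := by
  have hnhds : ∀ᶠ t in 𝓝 (1 : ℝ), lineMap q p t ∈ S :=
    (lineMap_continuous.tendsto' (1 : ℝ) p (lineMap_apply_one q p)).eventually
      (mem_interior_iff_mem_nhds.mp hp)
  exact ((eventually_nhdsWithin_of_eventually_nhds hnhds).and self_mem_nhdsWithin).exists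
    (f := 𝓝[>] (1 : ℝ)) |>.imp fun _ h => h.symm

namespace StrictlyConvexSet

variable {E : Type*} [AddCommGroup E] [Module ℝ E] [TopologicalSpace E] {B : Set E}

theorem eq_of_midpoint_notMem_interior (hB : StrictlyConvexSet B) {x y : E} (hx : x ∈ B)
    (hy : y ∈ B) (hxy : midpoint ℝ x y ∉ interior B) : x = y := by
  by_contra hne
  exact hxy (hB x hx y hy hne (midpoint_mem_openSegment x y))

theorem lineMap_mem_interior (hB : StrictlyConvexSet B) {w y : E} (hw : w ∈ interior B)
    (hy : y ∈ B) {t : ℝ} (ht : t ∈ Ioo 0 1) : lineMap w y t ∈ interior B := by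
  rcases eq_or_ne w y with rfl | hne
  · rwa [lineMap_same_apply]
  · exact hB w (interior_subset hw) y hy hne
      ((openSegment_eq_image_lineMap ℝ w y).symm ▸ mem_image_of_mem _ ht)

theorem mem_interior_of_fiber_subsingleton {F : Type*} [AddCommGroup F] [Module ℝ F]
    [TopologicalSpace F] [IsTopologicalAddGroup F] [ContinuousSMul ℝ F]
    (hB : StrictlyConvexSet B) (hBint : (interior B).Nonempty) (f : E →ₗ[ℝ] F) {z : E}
    (hz : f z ∈ interior (f '' B)) (hfiber : ∀ y ∈ B, f y = f z → y = z) : z ∈ interior B := by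
  obtain ⟨w, hw⟩ := hBint
  obtain ⟨t, ht, y, hy, hfy⟩ := exists_one_lt_lineMap_mem hz (f w)
  have hx : lineMap w y t⁻¹ ∈ interior B :=
    hB.lineMap_mem_interior hw hy ⟨inv_pos.2 (by linarith), inv_lt_one_of_one_lt₀ ht⟩
  have hfx : f (lineMap w y t⁻¹) = f z := by
    rw [show f (lineMap w y t⁻¹) = lineMap (f w) (f y) t⁻¹ from f.toAffineMap.apply_lineMap w y _,
      hfy, lineMap_lineMap_right, inv_mul_cancel₀ (by positivity), lineMap_apply_one]
  rwa [← hfiber _ (interior_subset hx) hfx]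

end StrictlyConvexSet

section Median

variable {n : ℕ} {B : Set (EuclideanSpace ℝ (Fin (n + 1)))} {v : EuclideanSpace ℝ (Fin (n + 1))}

theorem pv_surjective (v : EuclideanSpace ℝ (Fin (n + 1))) : Function.Surjective (pv v) :=
  fun k => ⟨k, Submodule.orthogonalProjectionOnto_mem_subspace_eq_self k⟩

theorem D0_subset_frontier : D0 B v ⊆ frontier B := by
  rintro z ⟨hzB, hzfr⟩
  refine ⟨subset_closure hzB, fun hzint => hzfr.2 ?_⟩
  exact ((pv v).isOpenMap (pv_surjective v)).image_interior_subset B ⟨z, hzint, rfl⟩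

theorem D0_subset_median : D0 B v ⊆ median B v :=
  fun z hz => ⟨z, Or.inl hz, z, Or.inl hz, rfl, (midpoint_self ℝ z).symm⟩

theorem Dplus_subset (hB : IsClosed B) : Dplus B v ⊆ B :=
  union_subset (fun _ hx => hx.1) fun _ hx => hB.frontier_subset hx.1

theorem Dminus_subset (hB : IsClosed B) : Dminus B v ⊆ B :=
  union_subset (fun _ hx => hx.1) fun _ hx => hB.frontier_subset hx.1

theorem eq_of_mem_Uplus_of_mem_Uminus {z : EuclideanSpace ℝ (Fin (n + 1))} (hzU : z ∈ Uplus B v)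
    (hzL : z ∈ Uminus B v) : ∀ y ∈ B, pv v y = pv v z → y = z := fun y hy hyz =>
  eq_of_orthogonalProjectionOnto_eq_of_inner_eq hyz
    (le_antisymm (hzU.2.2 y hy hyz) (hzL.2.2 y hy hyz))

end Median

theorem stmt8_general (n : ℕ) (B : Set (EuclideanSpace ℝ (Fin (n + 1))))
    (hBc : IsCompact B) (hBsc : StrictlyConvexSet B) (hBint : (interior B).Nonempty)
    (v : EuclideanSpace ℝ (Fin (n + 1))) :
    median B v ∩ frontier B = D0 B v := by
  refine Subset.antisymm ?_ fun z hz => ⟨D0_subset_median hz, D0_subset_frontier hz⟩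
  rintro _ ⟨⟨x, hxp, y, hxm, -, rfl⟩, hzfr⟩
  obtain rfl : x = y := hBsc.eq_of_midpoint_notMem_interior
    (Dplus_subset hBc.isClosed hxp) (Dminus_subset hBc.isClosed hxm) hzfr.2
  rw [midpoint_self] at hzfr ⊢
  rcases hxp with hx0 | hxU
  · exact hx0
  rcases hxm with hx0 | hxL
  · exact hx0
  exact (hzfr.2 <| hBsc.mem_interior_of_fiber_subsingleton hBint (pv v).toLinearMap hxU.2.1
    (eq_of_mem_Uplus_of_mem_Uminus hxU hxL)).elim

theorem stmt8 (n : ℕ) (B : Set (EuclideanSpace ℝ (Fin (n + 1))))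
    (hBc : IsCompact B) (hBsc : StrictlyConvexSet B) (hBint : (interior B).Nonempty)
    (v : EuclideanSpace ℝ (Fin (n + 1))) (hv : ‖v‖ = 1) :
    median B v ∩ frontier B = D0 B v :=
  stmt8_general n B hBc hBsc hBint v
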